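/- Let k1 < 0, k2 < 0, Δ = sqrt(k2² + 4k1) with k2² + 4k1 > 0, λ1 = (k2 - Δ)/2, λ2 = (k2 + Δ)/2, and b_j(t) = exp(λ_j t) - 1. Then the function t ↦ (b1(t)·λ2 - b2(t)·λ1)/(k1·Δ) is strictly monotonically increasing on (0, ∞). -/

import Mathlib

theorem stmt_1 (k1 k2 : ℝ) (hk1 : k1 < 0) (hk2 : k2 < 0)
    (hdisc : k2 ^ 2 + 4 * k1 > 0)
    (Δ l1 l2 : ℝ)
    (hΔ : Δ = Real.sqrt (k2 ^ 2 + 4 * k1))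
    (hl1 : l1 = (k2 - Δ) / 2) (hl2 : l2 = (k2 + Δ) / 2) :
    StrictMonoOn
      (fun t : ℝ =>
        ((Real.exp (l1 * t) - 1) * l2 - (Real.exp (l2 * t) - 1) * l1) / (k1 * Δ))
      (Set.Ioi 0) := by
  have hΔpos : 0 < Δ := by rw [hΔ]; exact Real.sqrt_pos.mpr hdisc
  have hΔsq : Δ ^ 2 = k2 ^ 2 + 4 * k1 := by
    rw [hΔ]; exact Real.sq_sqrt hdisc.le
  have hl1l2 : l1 * l2 = -k1 := by
    subst hl1 hl2; nlinarith
  have hlt : l1 < l2 := by subst hl1 hl2; linarith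
  have hderiv : ∀ t : ℝ, HasDerivAt
      (fun t : ℝ =>
        ((Real.exp (l1 * t) - 1) * l2 - (Real.exp (l2 * t) - 1) * l1) / (k1 * Δ))
      ((Real.exp (l1 * t) * l1 * l2 - Real.exp (l2 * t) * l2 * l1) / (k1 * Δ)) t := by
    intro t
    have h1 : HasDerivAt (fun t : ℝ => Real.exp (l1 * t)) (Real.exp (l1 * t) * l1) t := by
      exact ((Real.hasDerivAt_exp (l1 * t)).comp t ((hasDerivAt_id t).const_mul l1)).congr_deriv (by simp)
    have h2 : HasDerivAt (fun t : ℝ => Real.exp (l2 * t)) (Real.exp (l2 * t) * l2) t := by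
      exact ((Real.hasDerivAt_exp (l2 * t)).comp t ((hasDerivAt_id t).const_mul l2)).congr_deriv (by simp)
    exact (((h1.sub_const 1).mul_const l2).sub ((h2.sub_const 1).mul_const l1)).div_const _
  apply strictMonoOn_of_deriv_pos (convex_Ioi 0)
  · exact Continuous.continuousOn (by continuity)
  · intro t ht
    rw [interior_Ioi] at ht
    rw [(hderiv t).deriv]
    have hexp : Real.exp (l1 * t) < Real.exp (l2 * t) := by
      apply Real.exp_lt_exp.mpr
      exact mul_lt_mul_of_pos_right hlt ht
    have hnum : Real.exp (l1 * t) * l1 * l2 - Real.exp (l2 * t) * l2 * l1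
        = k1 * (Real.exp (l2 * t) - Real.exp (l1 * t)) := by
      have : (Real.exp (l1 * t) - Real.exp (l2 * t)) * (l1 * l2)
          = (Real.exp (l1 * t) - Real.exp (l2 * t)) * (-k1) := by rw [hl1l2]
      nlinarith [this]
    rw [hnum, mul_comm k1 Δ, mul_comm k1 _, mul_div_mul_right _ _ (ne_of_lt hk1)]
    exact div_pos (by linarith) hΔpos
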